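/- Let M be a left H-Hopf module with splitting ι, υ of the idempotent ν. With ξ := α ∘ (1_H ⊗ ι) and ψ := (1_H ⊗ υ) ∘ φ, one has ψ ∘ ξ = 1_{H ⊗ M^H}. -/

import Mathlib

open CategoryTheory MonoidalCategory BraidedCategory

universe v u

/-- A Hopf algebra object in a braided monoidal category, given by explicit
structure maps and axioms. -/
structure HopfAlg (C : Type u) [Category.{v} C] [MonoidalCategory C]
    [BraidedCategory C] where
  H : C
  η : 𝟙_ C ⟶ H
  μ : H ⊗ H ⟶ H
  ε : H ⟶ 𝟙_ C
  δ : H ⟶ H ⊗ H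
  σ : H ⟶ H
  mul_assoc : (μ ▷ H) ≫ μ = (α_ H H H).hom ≫ (H ◁ μ) ≫ μ
  one_mul : (η ▷ H) ≫ μ = (λ_ H).hom
  mul_one : (H ◁ η) ≫ μ = (ρ_ H).hom
  coassoc : δ ≫ (δ ▷ H) = δ ≫ (H ◁ δ) ≫ (α_ H H H).inv
  counit_left : δ ≫ (ε ▷ H) = (λ_ H).inv
  counit_right : δ ≫ (H ◁ ε) = (ρ_ H).inv
  mul_counit : μ ≫ ε = (ε ⊗ₘ ε) ≫ (λ_ (𝟙_ C)).hom
  one_counit : η ≫ ε = 𝟙 (𝟙_ C)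
  mul_comul : μ ≫ δ = (δ ⊗ₘ δ) ≫ tensorμ H H H H ≫ (μ ⊗ₘ μ)
  one_comul : η ≫ δ = (λ_ (𝟙_ C)).inv ≫ (η ⊗ₘ η)
  antipode_left : δ ≫ (σ ▷ H) ≫ μ = ε ≫ η
  antipode_right : δ ≫ (H ◁ σ) ≫ μ = ε ≫ η

/-- A left Hopf module over a Hopf algebra object `A` in a braided monoidal
category: a left `A`-module and left `A`-comodule satisfying the Hopf module
compatibility law. -/
structure HopfModule {C : Type u} [Category.{v} C] [MonoidalCategory C]
    [BraidedCategory C] (A : HopfAlg C) where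
  M : C
  act : A.H ⊗ M ⟶ M
  coact : M ⟶ A.H ⊗ M
  act_mul : (A.μ ▷ M) ≫ act = (α_ A.H A.H M).hom ≫ (A.H ◁ act) ≫ act
  act_one : (A.η ▷ M) ≫ act = (λ_ M).hom
  coact_comul : coact ≫ (A.δ ▷ M) = coact ≫ (A.H ◁ coact) ≫ (α_ A.H A.H M).inv
  coact_counit : coact ≫ (A.ε ▷ M) = (λ_ M).inv
  compat : act ≫ coact = (A.δ ⊗ₘ coact) ≫ tensorμ A.H A.H A.H M ≫ (A.μ ⊗ₘ act)

/-!
In Sweedler notation `ν m = σ(m₋₁) m₀`. Since the antipode is an anti-coalgebra morphism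
(`HopfObj.antipode_comul`), the compatibility law and coassociativity give
`φ (ν m) = σ(m₋₁₂₁) m₋₁₂₂ ⊗ σ(m₋₁₁) m₀` (with `m₋₁₂` braided past `m₋₁₁`), which the
antipode and counit axioms collapse to `1 ⊗ ν m`: `ν` lands in the coinvariants.
As `ι = ι ν`, the map `ι` is coinvariant, so `ξ = α (1 ⊗ ι)` is colinear,
`φ ξ = (1 ⊗ ξ)(δ ⊗ 1)`, and `ν ξ (h ⊗ x) = σ(h₁) h₂ ι x = ε(h) ι x`.
Since `υ = υ ν`, this gives `υ ξ = ε ⊗ 1`, hence `ψ ξ = (1 ⊗ υ ξ)(δ ⊗ 1) = 1` by the counit law.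
-/

section

variable {C : Type u} [Category.{v} C] [MonoidalCategory C] [BraidedCategory C]

theorem whiskerRight_braiding_tensorμ (X Y Z W : C) :
    ((β_ X Y).hom ▷ (Z ⊗ W)) ≫ tensorμ Y X Z W =
      (α_ X Y (Z ⊗ W)).hom ≫ (X ◁ (α_ Y Z W).inv) ≫ (α_ X (Y ⊗ Z) W).inv ≫
        ((β_ X (Y ⊗ Z)).hom ▷ W) ≫ (α_ (Y ⊗ Z) X W).hom := by
  simp [tensorμ]

theorem whiskerRight_braiding_comp_leftUnitor (X Y Z : C) (f : Y ⟶ 𝟙_ C) :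
    ((β_ X Y).hom ▷ Z) ≫ (α_ Y X Z).hom ≫ (f ▷ (X ⊗ Z)) ≫ (λ_ (X ⊗ Z)).hom =
      ((X ◁ f) ≫ (ρ_ X).hom) ▷ Z := by
  rw [← associator_naturality_left_assoc, ← comp_whiskerRight_assoc,
    ← braiding_naturality_right]
  simp

namespace HopfAlg

variable (A : HopfAlg C)

theorem antipode_comul : A.σ ≫ A.δ = A.δ ≫ (β_ A.H A.H).hom ≫ (A.σ ⊗ₘ A.σ) := by
  let _ : MonObj A.H := ⟨A.η, A.μ, A.one_mul, A.mul_one, A.mul_assoc⟩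
  let _ : ComonObj A.H :=
    { counit := A.ε, comul := A.δ, counit_comul := A.counit_left,
      comul_counit := A.counit_right,
      comul_assoc := by rw [reassoc_of% A.coassoc, Iso.inv_hom_id, Category.comp_id] }
  let _ : BimonObj A.H :=
    { mul_comul := A.mul_comul, one_comul := A.one_comul,
      mul_counit := A.mul_counit, one_counit := A.one_counit }
  let _ : HopfObj A.H :=
    { antipode := A.σ, antipode_left := A.antipode_left, antipode_right := A.antipode_right }
  exact HopfObj.antipode_comul A.H

end HopfAlg

namespace HopfModule

variable {A : HopfAlg C} (N : HopfModule A)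

/-- The idempotent `ν` of the paper, `m ↦ σ(m₋₁) m₀`. -/
def coinvariantProj : N.M ⟶ N.M := N.coact ≫ (A.σ ▷ N.M) ≫ N.act

def IsCoinvariant {X : C} (f : X ⟶ N.M) : Prop :=
  f ≫ N.coact = f ≫ (λ_ N.M).inv ≫ (A.η ▷ N.M)

theorem coinvariantProj_coact :
    N.coinvariantProj ≫ N.coact =
      N.coact ≫ (A.δ ▷ N.M) ≫ ((β_ A.H A.H).hom ▷ N.M) ≫ (α_ A.H A.H N.M).hom ≫
        ((A.δ ≫ (A.σ ▷ A.H) ≫ A.μ) ⊗ₘ ((A.σ ▷ N.M) ≫ N.act)) := by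
  have coact_coact : N.coact ≫ (A.δ ⊗ₘ N.coact) ≫ (α_ A.H A.H (A.H ⊗ N.M)).hom ≫
      (A.H ◁ (α_ A.H A.H N.M).inv) = N.coact ≫ (A.H ◁ N.coact) ≫ (A.H ◁ (A.δ ▷ N.M)) := by
    rw [MonoidalCategory.tensorHom_def, Category.assoc, reassoc_of% N.coact_comul,
      ← MonoidalCategory.whiskerLeft_comp, N.coact_comul]
    simp
  simp only [coinvariantProj, Category.assoc]
  rw [N.compat, whiskerRight_comp_tensorHom_assoc, A.antipode_comul,
    ← tensorHom_comp_whiskerRight, comp_whiskerRight]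
  simp only [Category.assoc]
  rw [tensorμ_natural_left_assoc, tensorHom_comp_tensorHom,
    reassoc_of% whiskerRight_braiding_tensorμ, reassoc_of% coact_coact,
    associator_inv_naturality_middle_assoc, ← comp_whiskerRight_assoc,
    braiding_naturality_right, comp_whiskerRight_assoc, associator_naturality_left_assoc,
    whiskerRight_comp_tensorHom, reassoc_of% N.coact_comul]

theorem isCoinvariant_coinvariantProj : N.IsCoinvariant N.coinvariantProj := by
  have split_unit : (A.ε ≫ A.η) ⊗ₘ ((A.σ ▷ N.M) ≫ N.act) =
      (A.ε ▷ _) ≫ (λ_ _).hom ≫ ((A.σ ▷ N.M) ≫ N.act) ≫ (λ_ _).inv ≫ (A.η ▷ _) := by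
    rw [MonoidalCategory.tensorHom_def, comp_whiskerRight, Category.assoc, ← whisker_exchange]
    simp
  rw [IsCoinvariant, coinvariantProj_coact, A.antipode_left, split_unit,
    reassoc_of% whiskerRight_braiding_comp_leftUnitor, ← comp_whiskerRight_assoc,
    reassoc_of% A.counit_right]
  simp [coinvariantProj]

theorem unit_tensorμ_mul_act :
    ((A.H ⊗ A.H) ◁ ((λ_ N.M).inv ≫ (A.η ▷ N.M))) ≫ tensorμ A.H A.H A.H N.M ≫
        (A.μ ⊗ₘ N.act) = (α_ A.H A.H N.M).hom ≫ (A.H ◁ N.act) := by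
  rw [MonoidalCategory.whiskerLeft_comp, ← tensorHom_id A.η, Category.assoc,
    tensorμ_natural_right_assoc, tensorHom_comp_tensorHom, A.mul_one,
    MonoidalCategory.whiskerLeft_id, Category.id_comp, MonoidalCategory.tensorHom_def]
  simp only [tensorμ, braiding_tensorUnit_right]
  monoidal

variable {N}

theorem IsCoinvariant.comp {X Y : C} (g : Y ⟶ X) {f : X ⟶ N.M} (hf : N.IsCoinvariant f) :
    N.IsCoinvariant (g ≫ f) := by
  unfold IsCoinvariant at hf ⊢
  rw [Category.assoc, hf, Category.assoc]

theorem IsCoinvariant.act_coact {X : C} {f : X ⟶ N.M} (hf : N.IsCoinvariant f) :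
    (A.H ◁ f) ≫ N.act ≫ N.coact =
      (A.δ ▷ X) ≫ (α_ A.H A.H X).hom ≫ (A.H ◁ ((A.H ◁ f) ≫ N.act)) := by
  have hf' : A.δ ⊗ₘ (f ≫ N.coact) =
      (A.δ ▷ X) ≫ ((A.H ⊗ A.H) ◁ f) ≫ ((A.H ⊗ A.H) ◁ ((λ_ N.M).inv ≫ (A.η ▷ N.M))) := by
    rw [hf, MonoidalCategory.tensorHom_def, MonoidalCategory.whiskerLeft_comp]
  rw [N.compat, ← id_tensorHom, tensorHom_comp_tensorHom_assoc, Category.id_comp, hf',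
    Category.assoc, Category.assoc, N.unit_tensorμ_mul_act, associator_naturality_right_assoc]
  simp

theorem IsCoinvariant.act_coinvariantProj {X : C} {f : X ⟶ N.M} (hf : N.IsCoinvariant f) :
    (A.H ◁ f) ≫ N.act ≫ N.coinvariantProj = (A.ε ▷ X) ≫ (λ_ X).hom ≫ f := by
  have act_act : (A.H ◁ N.act) ≫ N.act = (α_ A.H A.H N.M).inv ≫ (A.μ ▷ N.M) ≫ N.act := by
    rw [N.act_mul, Iso.inv_hom_id_assoc]
  rw [coinvariantProj, reassoc_of% hf.act_coact, whisker_exchange_assoc,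
    MonoidalCategory.whiskerLeft_comp_assoc, act_act, ← associator_naturality_left_assoc,
    associator_inv_naturality_right_assoc, Iso.hom_inv_id_assoc, whisker_exchange_assoc,
    ← comp_whiskerRight_assoc, ← comp_whiskerRight_assoc, Category.assoc, A.antipode_left,
    comp_whiskerRight_assoc, ← whisker_exchange_assoc, N.act_one, leftUnitor_naturality]

end HopfModule

end

/-- With ξ = α ∘ (1 ⊗ ι) and ψ = (1 ⊗ υ) ∘ φ, one has ψ ∘ ξ = 1. -/
theorem psi_comp_xi {C : Type u} [Category.{v} C] [MonoidalCategory C]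
    [BraidedCategory C] (A : HopfAlg C) (N : HopfModule A)
    (MH : C) (ι : MH ⟶ N.M) (υ : N.M ⟶ MH)
    (h1 : ι ≫ υ = 𝟙 MH)
    (h2 : υ ≫ ι = N.coact ≫ (A.σ ▷ N.M) ≫ N.act) :
    ((A.H ◁ ι) ≫ N.act) ≫ (N.coact ≫ (A.H ◁ υ)) = 𝟙 (A.H ⊗ MH) := by
  have hι : N.IsCoinvariant ι := by
    simpa only [HopfModule.coinvariantProj, ← h2, reassoc_of% h1]
      using N.isCoinvariant_coinvariantProj.comp ι
  have hυ : N.coinvariantProj ≫ υ = υ := by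
    rw [HopfModule.coinvariantProj, ← h2, Category.assoc, h1, Category.comp_id]
  have xi_comp_υ : (A.H ◁ ι) ≫ N.act ≫ υ = (A.ε ▷ MH) ≫ (λ_ MH).hom := by
    rw [← hυ, reassoc_of% hι.act_coinvariantProj, h1, Category.comp_id]
  rw [Category.assoc, reassoc_of% hι.act_coact, ← MonoidalCategory.whiskerLeft_comp,
    Category.assoc, xi_comp_υ, MonoidalCategory.whiskerLeft_comp,
    ← associator_naturality_middle_assoc, ← comp_whiskerRight_assoc, A.counit_right]
  simp
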